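/- arXiv:2209.03662 — 3 statements merged into one kernel-verified Lean document; each statement's English description precedes it below -/
import Mathlib

section
/- Let E and F be complex Banach spaces and U a nonempty open subset of E. A bounded holomorphic mapping f : U → F has relatively ∞-compact range (i.e., there exists a norm-null sequence (y_n) in F such that f(U) ⊆ {∑_n a_n y_n : ∑_n |a_n| ≤ 1}) if and only if f has relatively compact range (i.e., the norm closure of f(U) is compact). In that case m_∞(f(U)) = ‖f‖_∞, where m_∞(f(U)) = inf{ sup_n ‖y_n‖ : (y_n) norm-null in F, f(U) ⊆ {∑_n a_n y_n : ∑_n |a_n| ≤ 1} } and ‖f‖_∞ = sup_{x∈U} ‖f(x)‖. -/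
noncomputable section

open Filter Topology

/-- The `∞`-convex hull of a sequence `y` in `F`: all sums `∑ a n • y n` with `(a n)` in the
closed unit ball of `ℓ₁`. -/
def InftyConv {F : Type*} [NormedAddCommGroup F] [NormedSpace ℂ F] (y : ℕ → F) : Set F :=
  {z | ∃ a : ℕ → ℂ, Summable (fun n => ‖a n‖) ∧ (∑' n, ‖a n‖) ≤ 1 ∧
    HasSum (fun n => a n • y n) z}

/-- The measure `m_∞(K)` of the size of a relatively `∞`-compact set `K`. -/
def mInfty {F : Type*} [NormedAddCommGroup F] [NormedSpace ℂ F] (K : Set F) : ℝ :=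
  sInf {r | ∃ y : ℕ → F, Filter.Tendsto (fun n => ‖y n‖) Filter.atTop (nhds 0) ∧
    K ⊆ InftyConv y ∧ r = ⨆ n, ‖y n‖}


lemma norm_le_of_mem_inftyConv {F : Type*} [NormedAddCommGroup F] [NormedSpace ℂ F]
    {y : ℕ → F} {S : ℝ} (hS0 : 0 ≤ S) (hS : ∀ n, ‖y n‖ ≤ S) {z : F}
    (hz : z ∈ InftyConv y) : ‖z‖ ≤ S := by
  obtain ⟨a, hsum, hle, hz⟩ := hz
  have h1 : ∀ n, ‖a n • y n‖ ≤ ‖a n‖ * S := fun n => by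
    rw [norm_smul]; exact mul_le_mul_of_nonneg_left (hS n) (norm_nonneg _)
  have hs2 : Summable (fun n => ‖a n‖ * S) := hsum.mul_right S
  have hsn : Summable (fun n => ‖a n • y n‖) :=
    Summable.of_nonneg_of_le (fun n => norm_nonneg _) h1 hs2
  calc ‖z‖ = ‖∑' n, a n • y n‖ := by rw [hz.tsum_eq]
    _ ≤ ∑' n, ‖a n • y n‖ := norm_tsum_le_tsum_norm hsn
    _ ≤ ∑' n, ‖a n‖ * S := Summable.tsum_le_tsum h1 hsn hs2
    _ = (∑' n, ‖a n‖) * S := tsum_mul_right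
    _ ≤ 1 * S := mul_le_mul_of_nonneg_right hle hS0
    _ = S := one_mul S

lemma inftyConv_totallyBounded {F : Type*} [NormedAddCommGroup F] [NormedSpace ℂ F]
    {y : ℕ → F} (hy : Tendsto (fun n => ‖y n‖) atTop (𝓝 0)) :
    TotallyBounded (InftyConv y) := by
  rw [Metric.totallyBounded_iff]
  intro ε hε
  obtain ⟨N, hN⟩ : ∃ N, ∀ n ≥ N, ‖y n‖ ≤ ε / 4 := by
    obtain ⟨N, hN⟩ := Metric.tendsto_atTop.mp hy (ε / 4) (by linarith)
    exact ⟨N, fun n hn => by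
      have := hN n hn
      rw [Real.dist_eq, sub_zero, abs_of_nonneg (norm_nonneg _)] at this
      linarith⟩
  set T : Set F := (fun c : Fin N → ℂ => ∑ i, c i • y i) ''
    (Set.univ.pi fun _ => Metric.closedBall (0 : ℂ) 1) with hTdef
  have hT : IsCompact T := by
    apply (isCompact_univ_pi fun _ => isCompact_closedBall _ _).image
    exact continuous_finset_sum _ fun i _ => (continuous_apply i).smul continuous_const
  obtain ⟨t, htfin, htcov⟩ := Metric.totallyBounded_iff.mp hT.totallyBounded (ε / 2) (by linarith)
  refine ⟨t, htfin, ?_⟩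
  rintro z ⟨a, hsum, hle, hz⟩
  have hanorm : ∀ n, ‖a n‖ ≤ 1 := fun n =>
    le_trans (Summable.le_tsum hsum n fun j _ => norm_nonneg _) hle
  set head : F := ∑ i ∈ Finset.range N, a i • y i with hhead
  have hheadT : head ∈ T := by
    refine ⟨fun i => a i, fun i _ => ?_, ?_⟩
    · simpa [Metric.mem_closedBall, dist_zero_right] using hanorm i
    · rw [hhead, ← Fin.sum_univ_eq_sum_range (fun i => a i • y i) N]
  have htail : HasSum (fun n => a (n + N) • y (n + N)) (z - head) := by
    refine (hasSum_nat_add_iff (f := fun n => a n • y n) N).mpr ?_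
    rw [← hhead, sub_add_cancel]
    exact hz
  have hsum' : Summable (fun n => ‖a (n + N)‖) := (summable_nat_add_iff N).mpr hsum
  have h1 : ∀ n, ‖a (n + N) • y (n + N)‖ ≤ ‖a (n + N)‖ * (ε / 4) := fun n => by
    rw [norm_smul]
    exact mul_le_mul_of_nonneg_left (hN _ (Nat.le_add_left _ _)) (norm_nonneg _)
  have hsn : Summable (fun n => ‖a (n + N) • y (n + N)‖) :=
    Summable.of_nonneg_of_le (fun n => norm_nonneg _) h1 (hsum'.mul_right _)
  have htailnorm : ‖z - head‖ ≤ ε / 4 := by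
    have h2 : (∑' n, ‖a (n + N)‖) ≤ 1 := by
      have := Summable.sum_add_tsum_nat_add N hsum
      have h3 : 0 ≤ ∑ i ∈ Finset.range N, ‖a i‖ :=
        Finset.sum_nonneg fun i _ => norm_nonneg _
      linarith
    calc ‖z - head‖ = ‖∑' n, a (n + N) • y (n + N)‖ := by rw [htail.tsum_eq]
      _ ≤ ∑' n, ‖a (n + N) • y (n + N)‖ := norm_tsum_le_tsum_norm hsn
      _ ≤ ∑' n, ‖a (n + N)‖ * (ε / 4) := Summable.tsum_le_tsum h1 hsn (hsum'.mul_right _)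
      _ = (∑' n, ‖a (n + N)‖) * (ε / 4) := tsum_mul_right
      _ ≤ 1 * (ε / 4) := mul_le_mul_of_nonneg_right h2 (by linarith)
      _ = ε / 4 := one_mul _
  obtain ⟨c, hct, hc⟩ := Set.mem_iUnion₂.mp (htcov hheadT)
  refine Set.mem_iUnion₂.mpr ⟨c, hct, ?_⟩
  rw [Metric.mem_ball] at hc ⊢
  calc dist z c ≤ dist z head + dist head c := dist_triangle _ _ _
    _ ≤ ε / 4 + dist head c := by rw [dist_eq_norm]; linarith
    _ < ε / 4 + ε / 2 := by linarith
    _ < ε := by linarith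


lemma exists_null_seq {F : Type*} [NormedAddCommGroup F] [NormedSpace ℂ F] [CompleteSpace F]
    (K : Set F) (hK : IsCompact K) (M t : ℝ) (hM : ∀ z ∈ K, ‖z‖ ≤ M)
    (hM0 : 0 ≤ M) (ht : M < t) :
    ∃ y : ℕ → F, Tendsto (fun n => ‖y n‖) atTop (𝓝 0) ∧ K ⊆ InftyConv y ∧ ∀ n, ‖y n‖ ≤ t := by
  classical
  have ht0 : 0 < t := lt_of_le_of_lt hM0 ht
  set ε : ℝ := t - M with hε
  have hε0 : 0 < ε := by simp [hε]; linarith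
  -- the radii
  set b : ℕ → ℝ := fun k => Nat.casesOn k M (fun j => ε / 4 ^ (j + 1)) with hbdef
  have hb0 : b 0 = M := rfl
  have hbs : ∀ k, b (k + 1) = ε / 4 ^ (k + 1) := fun k => rfl
  have hbnn : ∀ k, 0 ≤ b k := by
    intro k; cases k with
    | zero => exact hM0
    | succ j => rw [hbs]; positivity
  have hbpos : ∀ k, 0 < b (k + 1) := fun k => by rw [hbs]; positivity
  have hbnull : Tendsto b atTop (𝓝 0) := by
    have h1 : Tendsto (fun k : ℕ => ε * (1 / 4 : ℝ) ^ k) atTop (𝓝 0) := by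
      simpa using (tendsto_pow_atTop_nhds_zero_of_lt_one (by norm_num : (0:ℝ) ≤ 1/4)
        (by norm_num : (1/4 : ℝ) < 1)).const_mul ε
    refine h1.congr' ?_
    filter_upwards [eventually_ge_atTop 1] with k hk
    obtain ⟨j, rfl⟩ := Nat.exists_eq_add_of_le hk
    rw [add_comm 1 j, hbs, one_div, inv_pow, div_eq_mul_inv]
  have hbsum : Summable b := by
    rw [← summable_nat_add_iff 1]
    have h2 : (fun k => b (k + 1)) = fun k => (ε / 4) * (1 / 4 : ℝ) ^ k := by
      funext k; rw [hbs, pow_succ, one_div, inv_pow]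
      field_simp
    rw [h2]
    exact (summable_geometric_of_lt_one (by norm_num) (by norm_num)).mul_left _
  -- the coefficients
  set lam : ℕ → ℝ := fun k => Nat.casesOn k ((M + ε / 2) / t) (fun j => ε / (t * 2 ^ (j + 2)))
    with hlamdef
  have hlam0 : lam 0 = (M + ε / 2) / t := rfl
  have hlams : ∀ k, lam (k + 1) = ε / (t * 2 ^ (k + 2)) := fun k => rfl
  have hlampos : ∀ k, 0 < lam k := by
    intro k; cases k with
    | zero => rw [hlam0]; positivity
    | succ j => rw [hlams]; positivity
  have hblam : ∀ k, b k ≤ lam k * t :=  by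
    intro k; cases k with
    | zero =>
      rw [hb0, hlam0, div_mul_cancel₀ _ (ne_of_gt ht0)]; linarith
    | succ j =>
      rw [hbs, hlams]
      have h3 : ε / (t * 2 ^ (j + 2)) * t = ε / 2 ^ (j + 2) := by
        field_simp
      rw [h3]
      have h4 : (2:ℝ) ^ (j + 2) ≤ 4 ^ (j + 1) := by
        have h5 : (4:ℝ) ^ (j + 1) = 2 ^ (2 * (j + 1)) := by
          rw [show (4:ℝ) = 2 ^ 2 by norm_num, ← pow_mul]
        rw [h5]
        exact pow_le_pow_right₀ (by norm_num) (by omega)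
      gcongr
  have hlamsummable : Summable lam := by
    rw [← summable_nat_add_iff 1]
    have : (fun k => lam (k + 1)) = fun k => (ε / (4 * t)) * (1 / 2 : ℝ) ^ k := by
      funext k; rw [hlams, pow_succ, pow_succ, one_div, inv_pow]
      field_simp
      ring
    rw [this]
    exact (summable_geometric_of_lt_one (by norm_num) (by norm_num)).mul_left _
  have hlamsum : ∑' k, lam k = 1 := by
    rw [Summable.tsum_eq_zero_add hlamsummable]
    have h2 : (fun k => lam (k + 1)) = fun k => (ε / (4 * t)) * (1 / 2 : ℝ) ^ k := by
      funext k; rw [hlams, pow_succ, pow_succ, one_div, inv_pow]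
      field_simp
      ring
    rw [h2, tsum_mul_left, tsum_geometric_of_lt_one (by norm_num) (by norm_num), hlam0]
    field_simp
    ring
  -- finite nets inside compact sets
  have net : ∀ (C : Set F) (r : ℝ), ∃ N : Finset F, ↑N ⊆ C ∧
      (IsCompact C → 0 < r → ∀ x ∈ C, ∃ z ∈ N, ‖x - z‖ ≤ r) := by
    intro C r
    by_cases h : IsCompact C ∧ 0 < r
    · obtain ⟨hC, hr⟩ := h
      obtain ⟨s, hsC, hsfin, hcov⟩ := hC.elim_finite_subcover_image
        (fun z (_ : z ∈ C) => Metric.isOpen_ball (x := z) (ε := r))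
        (fun x hx => Set.mem_biUnion hx (Metric.mem_ball_self hr))
      refine ⟨hsfin.toFinset, by simpa using hsC, fun _ _ x hx => ?_⟩
      obtain ⟨z, hz, hxz⟩ := Set.mem_iUnion₂.mp (hcov hx)
      refine ⟨z, hsfin.mem_toFinset.mpr hz, ?_⟩
      rw [← dist_eq_norm]
      exact le_of_lt (Metric.mem_ball.mp hxz)
    · exact ⟨∅, by simp, fun hC hr => absurd ⟨hC, hr⟩ h⟩
  choose netF hnetsub hnetcov using net
  -- the recursive compact sets
  set KK : ℕ → Set F := fun k => Nat.rec K
    (fun k C => (⋃ z ∈ (netF C (b (k + 1)) : Set F), (fun w => w - z) '' C) ∩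
      Metric.closedBall 0 (b (k + 1))) k with hKKdef
  set NN : ℕ → Finset F := fun k => netF (KK k) (b (k + 1)) with hNNdef
  have hKK0 : KK 0 = K := by rw [hKKdef]; rfl
  have hKKs : ∀ k, KK (k + 1) = (⋃ z ∈ (NN k : Set F), (fun w => w - z) '' (KK k)) ∩
      Metric.closedBall 0 (b (k + 1)) := by
    intro k
    rw [hNNdef, hKKdef]
  have hKcomp : ∀ k, IsCompact (KK k) := by
    intro k
    induction k with
    | zero => rw [hKK0]; exact hK
    | succ k ih =>
      rw [hKKs k]
      exact IsCompact.inter_right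
        ((NN k).finite_toSet.isCompact_biUnion fun z _ =>
          ih.image (continuous_id.sub continuous_const))
        Metric.isClosed_closedBall
  have hKball : ∀ k, KK k ⊆ Metric.closedBall 0 (b k) := by
    intro k
    cases k with
    | zero =>
      rw [hKK0, hb0]
      intro z hz
      rw [Metric.mem_closedBall, dist_zero_right]
      exact hM z hz
    | succ k => rw [hKKs k]; exact Set.inter_subset_right
  have hNNsub : ∀ k, (NN k : Set F) ⊆ KK k := by
    intro k; rw [hNNdef]; exact hnetsub _ _
  have hNNnorm : ∀ k, ∀ z ∈ NN k, ‖z‖ ≤ b k := by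
    intro k z hz
    have := hKball k (hNNsub k hz)
    rwa [Metric.mem_closedBall, dist_zero_right] at this
  have hnetKK : ∀ k, ∀ w ∈ KK k, ∃ z ∈ NN k, ‖w - z‖ ≤ b (k + 1) := by
    intro k
    rw [hNNdef]
    exact hnetcov _ _ (hKcomp k) (hbpos k)
  have hstep : ∀ k (w : F), ∃ z, w ∈ KK k → z ∈ NN k ∧ w - z ∈ KK (k + 1) := by
    intro k w
    by_cases hw : w ∈ KK k
    · obtain ⟨z, hz, hle⟩ := hnetKK k w hw
      refine ⟨z, fun _ => ⟨hz, ?_⟩⟩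
      rw [hKKs k]
      refine ⟨Set.mem_biUnion hz ⟨w, hw, rfl⟩, ?_⟩
      rwa [Metric.mem_closedBall, dist_zero_right]
    · exact ⟨0, fun h => absurd h hw⟩
  choose Z hZ using hstep
  -- the global sequence
  set y : ℕ → F := fun n =>
    (((lam (Nat.unpair n).1 : ℝ) : ℂ))⁻¹ •
      ((NN (Nat.unpair n).1).toList.getD (Nat.unpair n).2 0) with hydef
  have hynorm : ∀ n, ‖y n‖ ≤ (lam (Nat.unpair n).1)⁻¹ * b (Nat.unpair n).1 := by
    intro n
    simp only [hydef]
    rw [norm_smul, norm_inv, Complex.norm_real, Real.norm_eq_abs, abs_of_pos (hlampos _)]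
    refine mul_le_mul_of_nonneg_left ?_ (inv_nonneg.mpr (le_of_lt (hlampos _)))
    by_cases h : (Nat.unpair n).2 < ((NN (Nat.unpair n).1).toList).length
    · rw [List.getD_eq_getElem _ _ h]
      exact hNNnorm _ _ (Finset.mem_toList.mp (List.getElem_mem h))
    · rw [List.getD_eq_default _ _ (not_lt.mp h), norm_zero]
      exact hbnn _
  have hlaminv : ∀ k, (lam k)⁻¹ * b k ≤ t := by
    intro k
    rw [inv_mul_le_iff₀ (hlampos k)]
    exact hblam k
  have hyt : ∀ n, ‖y n‖ ≤ t := fun n => le_trans (hynorm n) (hlaminv _)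
  have hlevel : ∀ k, 1 ≤ k → (lam k)⁻¹ * b k ≤ 2 * t * (1 / 2 : ℝ) ^ k := by
    intro k hk
    obtain ⟨j, rfl⟩ := Nat.exists_eq_add_of_le hk
    rw [add_comm 1 j, hbs, hlams]
    have h4 : (4 : ℝ) ^ (j + 1) = 2 ^ (j + 1) * 2 ^ (j + 1) := by
      rw [show (4:ℝ) = 2 * 2 by norm_num, mul_pow]
    have heq : (ε / (t * 2 ^ (j + 2)))⁻¹ * (ε / 4 ^ (j + 1)) = 2 * t * (1 / 2) ^ (j + 1) := by
      rw [h4, one_div, inv_pow]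
      field_simp
      ring
    rw [heq]
  have hynull : Tendsto (fun n => ‖y n‖) atTop (𝓝 0) := by
    rw [Metric.tendsto_atTop]
    intro η hη
    obtain ⟨m, hm⟩ := exists_pow_lt_of_lt_one
      (show (0:ℝ) < η / (2 * t) by positivity) (by norm_num : (1/2 : ℝ) < 1)
    set K₀ := m + 1 with hK₀
    set Bd := ((Finset.range K₀).sup fun k => ((NN k).toList).length) with hBd
    set S := (Finset.range K₀ ×ˢ Finset.range Bd).image fun p => Nat.pair p.1 p.2 with hS
    refine ⟨(S.sup id) + 1, fun n hn => ?_⟩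
    rw [Real.dist_eq, sub_zero, abs_of_nonneg (norm_nonneg _)]
    by_cases hk : K₀ ≤ (Nat.unpair n).1
    · have h1 : ‖y n‖ ≤ 2 * t * (1 / 2 : ℝ) ^ (Nat.unpair n).1 :=
        le_trans (hynorm n) (hlevel _ (by omega))
      have h2 : (1 / 2 : ℝ) ^ (Nat.unpair n).1 ≤ (1 / 2 : ℝ) ^ m :=
        pow_le_pow_of_le_one (by norm_num) (by norm_num) (by omega)
      have h3 : 2 * t * (1 / 2 : ℝ) ^ m < 2 * t * (η / (2 * t)) :=
        mul_lt_mul_of_pos_left hm (by positivity)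
      have h5 : 2 * t * (η / (2 * t)) = η := by field_simp
      calc ‖y n‖ ≤ 2 * t * (1 / 2 : ℝ) ^ (Nat.unpair n).1 := h1
        _ ≤ 2 * t * (1 / 2 : ℝ) ^ m := by
            exact mul_le_mul_of_nonneg_left h2 (by positivity)
        _ < η := by rw [← h5]; exact h3
    · push_neg at hk
      have hzero : y n = 0 := by
        simp only [hydef]
        have h2 : ((NN (Nat.unpair n).1).toList).length ≤ (Nat.unpair n).2 := by
          by_contra h2
          push_neg at h2
          have hnS : n ∈ S := by
            rw [hS]
            refine Finset.mem_image.mpr ⟨((Nat.unpair n).1, (Nat.unpair n).2), ?_, Nat.pair_unpair n⟩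
            refine Finset.mem_product.mpr ⟨Finset.mem_range.mpr hk, Finset.mem_range.mpr ?_⟩
            rw [hBd]
            exact lt_of_lt_of_le h2
              (Finset.le_sup (f := fun k => ((NN k).toList).length) (Finset.mem_range.mpr hk))
          have hle : n ≤ S.sup id := Finset.le_sup (f := id) hnS
          omega
        rw [List.getD_eq_default _ _ h2, smul_zero]
      rw [hzero, norm_zero]
      exact hη
  refine ⟨y, hynull, ?_, hyt⟩
  intro x hx
  -- the chain of approximations
  set d : ℕ → F := fun k => Nat.rec x (fun k w => w - Z k w) k with hddef
  have hd0 : d 0 = x := by rw [hddef]; rfl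
  have hds : ∀ k, d (k + 1) = d k - Z k (d k) := by intro k; rw [hddef]
  have hdK : ∀ k, d k ∈ KK k := by
    intro k
    induction k with
    | zero => rw [hd0, hKK0]; exact hx
    | succ k ih => rw [hds]; exact (hZ k (d k) ih).2
  have hzmem : ∀ k, Z k (d k) ∈ NN k := fun k => (hZ k (d k) (hdK k)).1
  set zs : ℕ → F := fun k => Z k (d k) with hzsdef
  have hzsnorm : ∀ k, ‖zs k‖ ≤ b k := fun k => hNNnorm k _ (hzmem k)
  have hdnorm : ∀ k, ‖d k‖ ≤ b k := by
    intro k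
    have := hKball k (hdK k)
    rwa [Metric.mem_closedBall, dist_zero_right] at this
  have hdtend : Tendsto d atTop (𝓝 0) := squeeze_zero_norm hdnorm hbnull
  have hpartial : ∀ n, ∑ k ∈ Finset.range n, zs k = x - d n := by
    intro n
    induction n with
    | zero => rw [Finset.sum_range_zero, hd0, sub_self]
    | succ n ih =>
      rw [Finset.sum_range_succ, ih, hds n]
      simp only [hzsdef]
      abel
  have hzsum : Summable zs := Summable.of_norm_bounded hbsum hzsnorm
  obtain ⟨s, hs⟩ := hzsum
  have hsx : s = x := by
    have h1 := hs.tendsto_sum_nat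
    rw [show (fun n => ∑ k ∈ Finset.range n, zs k) = fun n => x - d n from funext hpartial] at h1
    have h2 : Tendsto (fun n => x - d n) atTop (𝓝 x) := by
      simpa using tendsto_const_nhds.sub hdtend
    exact tendsto_nhds_unique h1 h2
  rw [hsx] at hs
  -- the coefficients
  set idx : ℕ → ℕ := fun k => ((NN k).toList).idxOf (zs k) with hidxdef
  set g : ℕ → ℕ := fun k => Nat.pair k (idx k) with hgdef
  have hginj : Function.Injective g := by
    intro k k' h
    have h2 := congrArg (fun n => (Nat.unpair n).1) h
    simpa [hgdef, Nat.unpair_pair] using h2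
  have hidxlt : ∀ k, idx k < ((NN k).toList).length := by
    intro k
    simp only [hidxdef]
    exact List.idxOf_lt_length_iff.mpr (Finset.mem_toList.mpr (hzmem k))
  have hget : ∀ k, ((NN k).toList).getD (idx k) 0 = zs k := by
    intro k
    rw [List.getD_eq_getElem _ _ (hidxlt k)]
    simp only [hidxdef]
    exact List.getElem_idxOf _
  have hyg : ∀ k, y (g k) = (((lam k : ℝ) : ℂ))⁻¹ • zs k := by
    intro k
    simp only [hydef, hgdef, Nat.unpair_pair]
    rw [hget]
  set a : ℕ → ℂ := fun n => if n = Nat.pair (Nat.unpair n).1 (idx (Nat.unpair n).1)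
      then ((lam (Nat.unpair n).1 : ℝ) : ℂ) else 0 with hadef
  have hag : ∀ k, a (g k) = ((lam k : ℝ) : ℂ) := by
    intro k
    simp [hadef, hgdef, Nat.unpair_pair]
  have haoff : ∀ n ∉ Set.range g, a n = 0 := by
    intro n hn
    simp only [hadef]
    rw [if_neg]
    intro h
    exact hn ⟨(Nat.unpair n).1, by rw [hgdef]; exact h.symm⟩
  have hlamne : ∀ k, ((lam k : ℝ) : ℂ) ≠ 0 := fun k =>
    Complex.ofReal_ne_zero.mpr (hlampos k).ne'
  have hnorma : (fun n => ‖a n‖) ∘ g = lam := by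
    funext k
    simp only [Function.comp_apply]
    rw [hag k, Complex.norm_real, Real.norm_eq_abs, abs_of_pos (hlampos k)]
  refine ⟨a, ?_, ?_, ?_⟩
  · refine (hginj.summable_iff (f := fun n => ‖a n‖)
      (fun n hn => by simp only [haoff n hn, norm_zero])).mp ?_
    rw [hnorma]
    exact hlamsummable
  · have h1 : ∑' k, ‖a (g k)‖ = ∑' n, ‖a n‖ := by
      refine hginj.tsum_eq (f := fun n => ‖a n‖) ?_
      intro n hn
      by_contra hc
      exact hn (by rw [Function.mem_support, haoff n hc, norm_zero] at hn; exact absurd rfl hn)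
    rw [← h1]
    have h2 : ∑' k, ‖a (g k)‖ = ∑' k, lam k := tsum_congr fun k => congrFun hnorma k
    rw [h2, hlamsum]
  · refine (hginj.hasSum_iff (f := fun n => a n • y n)
      (fun n hn => by simp only [haoff n hn, zero_smul])).mp ?_
    have h3 : (fun n => a n • y n) ∘ g = zs := by
      funext k
      simp only [Function.comp_apply]
      rw [hag, hyg, smul_smul, mul_inv_cancel₀ (hlamne k), one_smul]
    rw [h3]
    exact hs



/-- A bounded holomorphic mapping `f : U → F` has relatively `∞`-compact range iff it has
relatively compact range, and in that case `m_∞(f(U)) = ‖f‖_∞`. -/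
theorem infty_compact_iff_compact_range {E F : Type*}
    [NormedAddCommGroup E] [NormedSpace ℂ E] [CompleteSpace E]
    [NormedAddCommGroup F] [NormedSpace ℂ F] [CompleteSpace F]
    (U : Set E) (hU : IsOpen U) (hUne : U.Nonempty)
    (f : E → F) (hf : DifferentiableOn ℂ f U) (hb : ∃ C, ∀ x ∈ U, ‖f x‖ ≤ C) :
    ((∃ y : ℕ → F, Filter.Tendsto (fun n => ‖y n‖) Filter.atTop (nhds 0) ∧
        f '' U ⊆ InftyConv y) ↔ IsCompact (closure (f '' U))) ∧
    (IsCompact (closure (f '' U)) →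
      mInfty (f '' U) = sSup ((fun x => ‖f x‖) '' U)) := by
  obtain ⟨C, hC⟩ := hb
  obtain ⟨x₀, hx₀⟩ := hUne
  set M := sSup ((fun x => ‖f x‖) '' U) with hMdef
  have hne : ((fun x => ‖f x‖) '' U).Nonempty := ⟨‖f x₀‖, ⟨x₀, hx₀, rfl⟩⟩
  have hbdd : BddAbove ((fun x => ‖f x‖) '' U) := by
    refine ⟨C, ?_⟩
    rintro r ⟨x, hx, rfl⟩
    exact hC x hx
  have hMle : ∀ x ∈ U, ‖f x‖ ≤ M := fun x hx => le_csSup hbdd ⟨x, hx, rfl⟩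
  have hM0 : 0 ≤ M := le_trans (norm_nonneg _) (hMle x₀ hx₀)
  have hclos : ∀ z ∈ closure (f '' U), ‖z‖ ≤ M := by
    have hsub : closure (f '' U) ⊆ Metric.closedBall 0 M := by
      refine closure_minimal ?_ Metric.isClosed_closedBall
      rintro w ⟨x, hx, rfl⟩
      rw [Metric.mem_closedBall, dist_zero_right]
      exact hMle x hx
    intro z hz
    have := hsub hz
    rwa [Metric.mem_closedBall, dist_zero_right] at this
  constructor
  · constructor
    · rintro ⟨y, hy, hsub⟩
      exact TotallyBounded.isCompact_of_isClosed
        (((inftyConv_totallyBounded hy).subset hsub).closure) isClosed_closure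
    · intro hcomp
      obtain ⟨y, hy1, hy2, _⟩ := exists_null_seq (closure (f '' U)) hcomp M (M + 1)
        hclos hM0 (by linarith)
      exact ⟨y, hy1, subset_trans subset_closure hy2⟩
  · intro hcomp
    have hlb : BddBelow {r | ∃ y : ℕ → F, Filter.Tendsto (fun n => ‖y n‖) Filter.atTop (nhds 0) ∧
        f '' U ⊆ InftyConv y ∧ r = ⨆ n, ‖y n‖} := by
      refine ⟨0, ?_⟩
      rintro r ⟨y, hy1, _, rfl⟩
      exact le_trans (norm_nonneg (y 0)) (le_ciSup hy1.bddAbove_range 0)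
    apply le_antisymm
    · rw [le_iff_forall_pos_le_add]
      intro η hη
      obtain ⟨y, h1, h2, h3⟩ := exists_null_seq (closure (f '' U)) hcomp M (M + η)
        hclos hM0 (by linarith)
      have hle : (⨆ n, ‖y n‖) ≤ M + η := ciSup_le h3
      refine le_trans ?_ hle
      exact csInf_le hlb ⟨y, h1, subset_trans subset_closure h2, rfl⟩
    · refine le_csInf ?_ ?_
      · obtain ⟨y, h1, h2, _⟩ := exists_null_seq (closure (f '' U)) hcomp M (M + 1)
          hclos hM0 (by linarith)
        exact ⟨⨆ n, ‖y n‖, y, h1, subset_trans subset_closure h2, rfl⟩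
      · rintro r ⟨y, hy1, hy2, rfl⟩
        refine csSup_le hne ?_
        rintro v ⟨x, hx, rfl⟩
        have hyb : BddAbove (Set.range fun n => ‖y n‖) := hy1.bddAbove_range
        have hS0 : 0 ≤ ⨆ n, ‖y n‖ := le_trans (norm_nonneg (y 0)) (le_ciSup hyb 0)
        exact norm_le_of_mem_inftyConv hS0 (fun n => le_ciSup hyb n) (hy2 ⟨x, hx, rfl⟩)
end
end

section
/- Let E, F be complex Banach spaces, U a nonempty open subset of E, and 1 ≤ p < ∞. For every bounded holomorphic function g : U → ℂ and every y ∈ F, the mapping g·y : U → F defined by (g·y)(x) = g(x)·y is a holomorphic mapping with relatively p-compact range, and m_p((g·y)(U)) = ‖g‖_∞ · ‖y‖, where ‖g‖_∞ = sup_{x∈U} |g(x)|. -/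
noncomputable section

open Filter Topology

/-- Membership of a scalar sequence in the coefficient ball: the closed unit ball of `c₀`
when `p = 1`, and the closed unit ball of `ℓ_{p*}` (with `p* = p/(p-1)`) when `p ≠ 1`. -/
def InCoefBall (p : ℝ) (a : ℕ → ℂ) : Prop :=
  (p = 1 ∧ (∀ n, ‖a n‖ ≤ 1) ∧ Filter.Tendsto (fun n => ‖a n‖) Filter.atTop (nhds 0)) ∨
  (p ≠ 1 ∧ Summable (fun n => ‖a n‖ ^ (p / (p - 1))) ∧ (∑' n, ‖a n‖ ^ (p / (p - 1))) ≤ 1)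

/-- The `p`-convex hull of a sequence `y` in `F`. -/
def pConv {F : Type*} [NormedAddCommGroup F] [NormedSpace ℂ F] (p : ℝ) (y : ℕ → F) :
    Set F :=
  {z | ∃ a : ℕ → ℂ, InCoefBall p a ∧ HasSum (fun n => a n • y n) z}

/-- A set `K ⊆ F` is relatively `p`-compact if it is contained in the `p`-convex hull of a
sequence `y` with `∑ ‖y n‖ ^ p < ∞`. -/
def RelPCompact {F : Type*} [NormedAddCommGroup F] [NormedSpace ℂ F] (p : ℝ)
    (K : Set F) : Prop :=
  ∃ y : ℕ → F, Summable (fun n => ‖y n‖ ^ p) ∧ K ⊆ pConv p y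

/-- The measure `m_p(K)` of the size of a relatively `p`-compact set `K`. -/
def mp {F : Type*} [NormedAddCommGroup F] [NormedSpace ℂ F] (p : ℝ) (K : Set F) : ℝ :=
  sInf {r | ∃ y : ℕ → F, Summable (fun n => ‖y n‖ ^ p) ∧ K ⊆ pConv p y ∧
    r = (∑' n, ‖y n‖ ^ p) ^ (1 / p)}

/-! With `M = ‖g‖_∞`, every value `g x • y` equals `(g x / M) • (M • y)` with `‖g x / M‖ ≤ 1`, so
the range lies in the `p`-convex hull of the one-term sequence `(M • y, 0, 0, …)`; this gives
`m_p ≤ M ‖y‖`. Conversely, Hölder's inequality bounds the norm of every point of a `p`-convex hull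
of `(Y n)` by `(∑ ‖Y n‖ ^ p) ^ (1 / p)`, so `m_p` dominates every `‖g x‖ ‖y‖`. -/

section PConvex

variable {F : Type*} [NormedAddCommGroup F] [NormedSpace ℂ F]

lemma hasSum_norm_rpow_pi_single {G : Type*} [NormedAddCommGroup G] {p : ℝ} (hp : p ≠ 0)
    (i : ℕ) (v : G) : HasSum (fun n => ‖(Pi.single i v : ℕ → G) n‖ ^ p) (‖v‖ ^ p) := by
  rw [funext (Pi.apply_single (fun _ (w : G) => ‖w‖ ^ p) (fun _ => by simp [Real.zero_rpow hp]) i v)]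
  exact hasSum_pi_single i _

lemma inCoefBall_pi_single {p : ℝ} (hp : 1 ≤ p) (i : ℕ) {c : ℂ} (hc : ‖c‖ ≤ 1) :
    InCoefBall p (Pi.single i c) := by
  rcases hp.eq_or_lt with rfl | hp
  · refine Or.inl ⟨rfl, fun n => ?_, tendsto_const_nhds.congr' ?_⟩
    · rcases eq_or_ne n i with rfl | hn
      · simpa using hc
      · simp [hn]
    · filter_upwards [eventually_gt_atTop i] with n hn
      simp [hn.ne']
  · have hq : 0 < p / (p - 1) := div_pos (by linarith) (by linarith)
    have hsum := hasSum_norm_rpow_pi_single hq.ne' i c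
    exact Or.inr ⟨hp.ne', hsum.summable, hsum.tsum_eq ▸ Real.rpow_le_one (norm_nonneg c) hc hq.le⟩

lemma InCoefBall.summable_and_tsum_mul_le {p : ℝ} (hp : 1 ≤ p) {a : ℕ → ℂ}
    (ha : InCoefBall p a) {b : ℕ → ℝ} (hb : ∀ n, 0 ≤ b n) (hbp : Summable fun n => b n ^ p) :
    (Summable fun n => ‖a n‖ * b n) ∧ ∑' n, ‖a n‖ * b n ≤ (∑' n, b n ^ p) ^ (1 / p) := by
  rcases ha with ⟨rfl, ha, -⟩ | ⟨hp1, haq, haq_le⟩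
  · simp only [Real.rpow_one, div_one] at hbp ⊢
    have hle : ∀ n, ‖a n‖ * b n ≤ b n := fun n => mul_le_of_le_one_left (hb n) (ha n)
    have hsum : Summable fun n => ‖a n‖ * b n :=
      hbp.of_nonneg_of_le (fun n => mul_nonneg (norm_nonneg _) (hb n)) hle
    exact ⟨hsum, hsum.tsum_le_tsum hle hbp⟩
  · have hconj : p.HolderConjugate (p / (p - 1)) :=
      (Real.holderConjugate_iff_eq_conjExponent (hp.lt_of_ne' hp1)).mpr rfl
    obtain ⟨hsum, hle⟩ := Real.summable_and_inner_le_Lp_mul_Lq_tsum_of_nonneg hconj.symm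
      (fun n => norm_nonneg (a n)) hb haq hbp
    have ha_le : (∑' n, ‖a n‖ ^ (p / (p - 1))) ^ (1 / (p / (p - 1))) ≤ 1 :=
      Real.rpow_le_one (tsum_nonneg fun n => by positivity) haq_le (by positivity)
    refine ⟨hsum, hle.trans ?_⟩
    exact mul_le_of_le_one_left
      (Real.rpow_nonneg (tsum_nonneg fun n => Real.rpow_nonneg (hb n) p) _) ha_le

lemma norm_le_of_mem_pConv {p : ℝ} (hp : 1 ≤ p) {Y : ℕ → F}
    (hY : Summable fun n => ‖Y n‖ ^ p) {z : F} (hz : z ∈ pConv p Y) :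
    ‖z‖ ≤ (∑' n, ‖Y n‖ ^ p) ^ (1 / p) := by
  obtain ⟨a, ha, hz⟩ := hz
  obtain ⟨hsum, hle⟩ := ha.summable_and_tsum_mul_le hp (fun n => norm_nonneg (Y n)) hY
  exact (hz.norm_le_of_bounded hsum.hasSum fun n => (norm_smul _ _).le).trans hle

lemma norm_le_mp {p : ℝ} (hp : 1 ≤ p) {K : Set F} (hK : RelPCompact p K) {z : F}
    (hz : z ∈ K) : ‖z‖ ≤ mp p K := by
  obtain ⟨Y, hY, hKY⟩ := hK
  refine le_csInf ⟨_, Y, hY, hKY, rfl⟩ ?_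
  rintro _ ⟨Z, hZ, hKZ, rfl⟩
  exact norm_le_of_mem_pConv hp hZ (hKZ hz)

lemma mp_le {p : ℝ} {K : Set F} {Y : ℕ → F} (hY : Summable fun n => ‖Y n‖ ^ p)
    (hKY : K ⊆ pConv p Y) : mp p K ≤ (∑' n, ‖Y n‖ ^ p) ^ (1 / p) := by
  refine csInf_le ⟨0, ?_⟩ ⟨Y, hY, hKY, rfl⟩
  rintro _ ⟨Z, -, -, rfl⟩
  positivity

lemma mp_nonneg (p : ℝ) (K : Set F) : 0 ≤ mp p K := by
  refine Real.sInf_nonneg ?_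
  rintro _ ⟨Z, -, -, rfl⟩
  positivity

lemma smul_mem_pConv_pi_single {p : ℝ} (hp : 1 ≤ p) {c : ℂ} (hc : ‖c‖ ≤ 1) (v : F) :
    c • v ∈ pConv p (Pi.single 0 v) := by
  refine ⟨Pi.single 0 c, inCoefBall_pi_single hp 0 hc, ?_⟩
  simp_rw [Pi.apply_single₂ (fun _ (a : ℂ) (w : F) => a • w) (fun _ => smul_zero 0)]
  exact hasSum_pi_single 0 _

lemma smul_mem_pConv_pi_single_smul {p : ℝ} (hp : 1 ≤ p) {M : ℝ} (hM : 0 ≤ M) {c : ℂ}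
    (hc : ‖c‖ ≤ M) (y : F) : c • y ∈ pConv p (Pi.single 0 ((M : ℂ) • y)) := by
  have hcM : c = c / M * M := by
    refine (div_mul_cancel_of_imp fun h => ?_).symm
    simpa [Complex.ofReal_eq_zero.mp h] using hc
  rw [hcM, ← smul_smul]
  refine smul_mem_pConv_pi_single hp ?_ _
  rw [norm_div, Complex.norm_of_nonneg hM]
  exact div_le_one_of_le₀ hc hM

end PConvex

theorem pcompact_range_smul_general {E F : Type*}
    [NormedAddCommGroup E] [NormedSpace ℂ E]
    [NormedAddCommGroup F] [NormedSpace ℂ F]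
    (U : Set E) (p : ℝ) (hp : 1 ≤ p)
    (g : E → ℂ) (hg : DifferentiableOn ℂ g U) (hgb : ∃ C, ∀ x ∈ U, ‖g x‖ ≤ C)
    (y : F) :
    DifferentiableOn ℂ (fun x => g x • y) U ∧
    RelPCompact p ((fun x => g x • y) '' U) ∧
    mp p ((fun x => g x • y) '' U) = sSup ((fun x => ‖g x‖) '' U) * ‖y‖ := by
  obtain ⟨C, hC⟩ := hgb
  set M := sSup ((fun x => ‖g x‖) '' U) with hM_def
  have hle_M : ∀ x ∈ U, ‖g x‖ ≤ M := fun x hx =>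
    le_csSup ⟨C, by rintro _ ⟨x, hx, rfl⟩; exact hC x hx⟩ ⟨x, hx, rfl⟩
  have hM : 0 ≤ M := Real.sSup_nonneg (by rintro _ ⟨x, -, rfl⟩; exact norm_nonneg _)
  have hp0 : p ≠ 0 := by linarith
  have hY : HasSum (fun n => ‖(Pi.single 0 ((M : ℂ) • y) : ℕ → F) n‖ ^ p) ((M * ‖y‖) ^ p) := by
    simpa [norm_smul, abs_of_nonneg hM] using
      hasSum_norm_rpow_pi_single hp0 0 ((M : ℂ) • y)
  have hsub : (fun x => g x • y) '' U ⊆ pConv p (Pi.single 0 ((M : ℂ) • y)) := by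
    rintro _ ⟨x, hx, rfl⟩
    exact smul_mem_pConv_pi_single_smul hp hM (hle_M x hx) y
  have hK : RelPCompact p ((fun x => g x • y) '' U) := ⟨_, hY.summable, hsub⟩
  refine ⟨hg.smul_const y, hK, le_antisymm ?_ ?_⟩
  · calc mp p ((fun x => g x • y) '' U) ≤ ((M * ‖y‖) ^ p) ^ (1 / p) :=
          hY.tsum_eq ▸ mp_le hY.summable hsub
      _ = M * ‖y‖ := by rw [one_div, Real.rpow_rpow_inv (by positivity) hp0]
  · rw [hM_def, sSup_image', Real.iSup_mul_of_nonneg (norm_nonneg y)]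
    refine Real.iSup_le (fun x => ?_) (mp_nonneg p _)
    exact (norm_smul (g x) y).symm.le.trans (norm_le_mp hp hK ⟨x, x.2, rfl⟩)

/-- For a bounded holomorphic function `g : U → ℂ` and `y ∈ F`, the mapping `g · y` has
relatively `p`-compact range and `m_p((g·y)(U)) = ‖g‖_∞ ‖y‖`. -/
theorem pcompact_range_smul {E F : Type*}
    [NormedAddCommGroup E] [NormedSpace ℂ E] [CompleteSpace E]
    [NormedAddCommGroup F] [NormedSpace ℂ F] [CompleteSpace F]
    (U : Set E) (hU : IsOpen U) (hUne : U.Nonempty) (p : ℝ) (hp : 1 ≤ p)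
    (g : E → ℂ) (hg : DifferentiableOn ℂ g U) (hgb : ∃ C, ∀ x ∈ U, ‖g x‖ ≤ C)
    (y : F) :
    DifferentiableOn ℂ (fun x => g x • y) U ∧
    RelPCompact p ((fun x => g x • y) '' U) ∧
    mp p ((fun x => g x • y) '' U) = sSup ((fun x => ‖g x‖) '' U) * ‖y‖ :=
  pcompact_range_smul_general U p hp g hg hgb y
end
end

section
/- Let E, F, G, H be complex Banach spaces, U a nonempty open subset of E, V a nonempty open subset of H, and 1 ≤ p < ∞. If h : V → U is holomorphic, f : U → F is a holomorphic mapping with relatively p-compact range, and S : F → G is a bounded linear operator, then S∘f∘h : V → G is a holomorphic mapping with relatively p-compact range and m_p((S∘f∘h)(V)) ≤ ‖S‖ · m_p(f(U)). -/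
noncomputable section

open Filter Topology
open Pointwise

/-- The ideal property: if `h : V → U` is holomorphic, `f : U → F` has relatively `p`-compact
range and `S : F → G` is a bounded linear operator, then `S ∘ f ∘ h` has relatively
`p`-compact range with `m_p((S∘f∘h)(V)) ≤ ‖S‖ m_p(f(U))`. -/
theorem pcompact_range_ideal_property {E F G H : Type*}
    [NormedAddCommGroup E] [NormedSpace ℂ E] [CompleteSpace E]
    [NormedAddCommGroup F] [NormedSpace ℂ F] [CompleteSpace F]
    [NormedAddCommGroup G] [NormedSpace ℂ G] [CompleteSpace G]
    [NormedAddCommGroup H] [NormedSpace ℂ H] [CompleteSpace H]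
    (U : Set E) (hU : IsOpen U) (hUne : U.Nonempty)
    (V : Set H) (hV : IsOpen V) (hVne : V.Nonempty) (p : ℝ) (hp : 1 ≤ p)
    (h : H → E) (hh : DifferentiableOn ℂ h V) (hhU : Set.MapsTo h V U)
    (f : E → F) (hf : DifferentiableOn ℂ f U) (hpc : RelPCompact p (f '' U))
    (S : F →L[ℂ] G) :
    DifferentiableOn ℂ (fun v => S (f (h v))) V ∧
    RelPCompact p ((fun v => S (f (h v))) '' V) ∧
    mp p ((fun v => S (f (h v))) '' V) ≤ ‖S‖ * mp p (f '' U) := by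
  have hp0 : (0:ℝ) < p := lt_of_lt_of_le one_pos hp
  have hdiff : DifferentiableOn ℂ (fun v => S (f (h v))) V :=
    S.differentiable.comp_differentiableOn (hf.comp hh hhU)
  -- For every competitor `y` for `f '' U`, `S ∘ y` is a competitor for the image.
  have key : ∀ y : ℕ → F, Summable (fun n => ‖y n‖ ^ p) → f '' U ⊆ pConv p y →
      Summable (fun n => ‖(fun n => S (y n)) n‖ ^ p) ∧
      ((fun v => S (f (h v))) '' V ⊆ pConv p (fun n => S (y n))) ∧
      (∑' n, ‖(fun n => S (y n)) n‖ ^ p) ^ (1/p) ≤ ‖S‖ * (∑' n, ‖y n‖ ^ p) ^ (1/p) := by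
    intro y hy hsub
    have hle : ∀ n, ‖S (y n)‖ ^ p ≤ ‖S‖ ^ p * ‖y n‖ ^ p := by
      intro n
      rw [← Real.mul_rpow (norm_nonneg _) (norm_nonneg _)]
      exact Real.rpow_le_rpow (norm_nonneg _) (S.le_opNorm _) hp0.le
    have hsum : Summable (fun n => ‖S (y n)‖ ^ p) :=
      Summable.of_nonneg_of_le (fun n => Real.rpow_nonneg (norm_nonneg _) p) hle
        (hy.mul_left _)
    refine ⟨hsum, ?_, ?_⟩
    · rintro _ ⟨v, hv, rfl⟩
      obtain ⟨a, ha, hsum'⟩ := hsub ⟨h v, hhU hv, rfl⟩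
      exact ⟨a, ha, by simpa [map_smul] using (S.hasSum hsum')⟩
    · have h1 : (∑' n, ‖S (y n)‖ ^ p) ≤ ‖S‖ ^ p * ∑' n, ‖y n‖ ^ p := by
        rw [← tsum_mul_left]
        exact Summable.tsum_le_tsum hle hsum ((hy.mul_left _))
      have h2 : (∑' n, ‖S (y n)‖ ^ p) ^ (1/p) ≤ (‖S‖ ^ p * ∑' n, ‖y n‖ ^ p) ^ (1/p) :=
        Real.rpow_le_rpow (tsum_nonneg fun n => Real.rpow_nonneg (norm_nonneg _) p) h1
          (by positivity)
      refine h2.trans_eq ?_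
      rw [Real.mul_rpow (Real.rpow_nonneg (norm_nonneg _) p)
        (tsum_nonneg fun n => Real.rpow_nonneg (norm_nonneg _) p),
        ← Real.rpow_mul (norm_nonneg S), mul_one_div, div_self hp0.ne', Real.rpow_one]
  obtain ⟨y₀, hy₀, hsub₀⟩ := hpc
  obtain ⟨hsum₀, hincl₀, _⟩ := key y₀ hy₀ hsub₀
  refine ⟨hdiff, ⟨_, hsum₀, hincl₀⟩, ?_⟩
  -- bound on mp
  have hbdd : BddBelow {r | ∃ y : ℕ → G, Summable (fun n => ‖y n‖ ^ p) ∧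
      ((fun v => S (f (h v))) '' V) ⊆ pConv p y ∧ r = (∑' n, ‖y n‖ ^ p) ^ (1/p)} := by
    refine ⟨0, ?_⟩
    rintro r ⟨y, _, _, rfl⟩
    exact Real.rpow_nonneg (tsum_nonneg fun n => Real.rpow_nonneg (norm_nonneg _) p) _
  have hSset : mp p ((fun v => S (f (h v))) '' V) ≤
      sInf ((‖S‖ : ℝ) • {r | ∃ y : ℕ → F, Summable (fun n => ‖y n‖ ^ p) ∧
        f '' U ⊆ pConv p y ∧ r = (∑' n, ‖y n‖ ^ p) ^ (1/p)}) := by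
    refine le_csInf ⟨‖S‖ * (∑' n, ‖y₀ n‖ ^ p) ^ (1/p),
      ⟨_, ⟨y₀, hy₀, hsub₀, rfl⟩, rfl⟩⟩ ?_
    rintro b ⟨r, ⟨y, hy, hsub, rfl⟩, rfl⟩
    obtain ⟨hs1, hs2, hs3⟩ := key y hy hsub
    exact csInf_le_of_le hbdd ⟨_, hs1, hs2, rfl⟩ (by simpa using hs3)
  refine hSset.trans_eq ?_
  rw [Real.sInf_smul_of_nonneg (norm_nonneg S), smul_eq_mul]
  rfl
end
end
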